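/- Fix m ≥ 2 mean times between false alarms 1 ≤ τ_1 < ⋯ < τ_m, c_F > 0, and attacker types φ = 1,…,n_φ with priors π_φ ≥ 0 summing to 1, where for each type φ the payoffs satisfy either 0 < I_1^φ < I_2^φ < ⋯ < I_m^φ or I_j^φ = 0 for all j. If c_F/τ_{m−1} < c_F/τ_m + Σ_{φ=1}^{n_φ} π_φ I_m^φ, then there is no pure-strategy Bayesian Nash equilibrium: there exist no indices l and (i_1,…,i_{n_φ}) such that the standard basis vectors p* = e_l and q*_φ = e_{i_φ} form a Bayesian Nash equilibrium. -/
import Mathlib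


open Matrix BigOperators

/-- A (mixed strategy) probability vector: nonnegative entries summing to one. -/
def IsProbVec {m : ℕ} (p : Fin m → ℝ) : Prop := (∀ i, 0 ≤ p i) ∧ ∑ i, p i = 1

/-- Defender cost matrix `Ω(φ)_{i,j} = c_F/τ_i + 1{j ≤ i}·I_j^φ`. -/
noncomputable def OmegaMat {m nφ : ℕ} (τ : Fin m → ℝ) (cF : ℝ) (I : Fin nφ → Fin m → ℝ)
    (φ : Fin nφ) : Matrix (Fin m) (Fin m) ℝ :=
  Matrix.of fun i j => cF / τ i + if j ≤ i then I φ j else 0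

/-- Attacker payoff matrix `Υ(φ)_{i,j} = 1{j ≤ i}·I_j^φ`. -/
noncomputable def UpsilonMat {m nφ : ℕ} (I : Fin nφ → Fin m → ℝ) (φ : Fin nφ) :
    Matrix (Fin m) (Fin m) ℝ :=
  Matrix.of fun i j => if j ≤ i then I φ j else 0

/-- Bayesian Nash equilibrium of the threshold-switching game: `p` minimizes the
prior-averaged defender cost against `(q_φ)` and each `q_φ` maximizes the payoff of
attacker type `φ` against `p`. -/
noncomputable def IsBNE {m nφ : ℕ} (τ : Fin m → ℝ) (cF : ℝ) (I : Fin nφ → Fin m → ℝ)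
    (π : Fin nφ → ℝ) (p : Fin m → ℝ) (q : Fin nφ → Fin m → ℝ) : Prop :=
  IsProbVec p ∧ (∀ φ, IsProbVec (q φ)) ∧
  (∀ p' : Fin m → ℝ, IsProbVec p' →
    ∑ φ, π φ * (p ⬝ᵥ (OmegaMat τ cF I φ *ᵥ q φ)) ≤
      ∑ φ, π φ * (p' ⬝ᵥ (OmegaMat τ cF I φ *ᵥ q φ))) ∧
  (∀ φ, ∀ q' : Fin m → ℝ, IsProbVec q' →
    p ⬝ᵥ (UpsilonMat I φ *ᵥ q') ≤ p ⬝ᵥ (UpsilonMat I φ *ᵥ q φ))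

lemma probvec_single {m : ℕ} (l : Fin m) : IsProbVec (Pi.single l 1 : Fin m → ℝ) := by
  constructor
  · intro i; rcases eq_or_ne i l with h|h <;> simp [Pi.single_apply, h]
  · simp

lemma single_dot_mulVec {m : ℕ} (M : Matrix (Fin m) (Fin m) ℝ) (l j : Fin m) :
    (Pi.single l 1 : Fin m → ℝ) ⬝ᵥ (M *ᵥ (Pi.single j 1 : Fin m → ℝ)) = M l j := by
  simp [dotProduct, mulVec, Pi.single_apply, mul_ite, ite_mul]

/-- If `c_F/τ_{m-1} < c_F/τ_m + Σ_φ π_φ I_m^φ` then there is no pure-strategy Bayesian Nash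
equilibrium: no standard basis vectors form a Bayesian Nash equilibrium. -/
theorem no_pure_bne_of_strict_ineq (m nφ : ℕ) (hm : 2 ≤ m)
    (τ : Fin m → ℝ) (hτmono : StrictMono τ) (hτ1 : 1 ≤ τ ⟨0, by omega⟩)
    (cF : ℝ) (hcF : 0 < cF)
    (π : Fin nφ → ℝ) (hπ0 : ∀ φ, 0 ≤ π φ) (hπ1 : ∑ φ, π φ = 1)
    (I : Fin nφ → Fin m → ℝ)
    (hI : ∀ φ, (0 < I φ ⟨0, by omega⟩ ∧ StrictMono (I φ)) ∨ (∀ j, I φ j = 0))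
    (hstrict : cF / τ ⟨m - 2, by omega⟩ <
      cF / τ ⟨m - 1, by omega⟩ + ∑ φ, π φ * I φ ⟨m - 1, by omega⟩) :
    ¬ ∃ (l : Fin m) (i : Fin nφ → Fin m),
        IsBNE τ cF I π (Pi.single l 1) (fun φ => Pi.single (i φ) 1) := by
  rintro ⟨l, i, hbne⟩
  rw [IsBNE] at hbne
  obtain ⟨hp, hq, hdef, hatt⟩ := hbne
  have hτpos : ∀ k : Fin m, 0 < τ k := by
    intro k
    have h0k : (⟨0, by omega⟩ : Fin m) ≤ k := by simp [Fin.le_def]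
    have := hτmono.monotone h0k
    linarith
  -- attacker best response: i φ = l for nonzero types
  have key : ∀ φ (k : Fin m),
      (if i φ ≤ k then I φ (i φ) else 0) = (if l ≤ k then I φ l else 0) := by
    intro φ k
    rcases hI φ with ⟨h0, hmono⟩ | hz
    · have hbr := hatt φ (Pi.single l 1) (probvec_single l)
      rw [single_dot_mulVec, single_dot_mulVec] at hbr
      simp only [UpsilonMat, Matrix.of_apply, le_refl, if_true] at hbr
      have hIl : 0 < I φ l := by
        have h0l : (⟨0, by omega⟩ : Fin m) ≤ l := by simp [Fin.le_def]
        have := hmono.monotone h0l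
        linarith
      have hil : i φ = l := by
        by_contra hne
        rcases le_or_gt (i φ) l with hle | hlt
        · have hlt' : i φ < l := lt_of_le_of_ne hle hne
          rw [if_pos hle] at hbr
          exact absurd hbr (not_le.mpr (hmono hlt'))
        · rw [if_neg (not_le.mpr hlt)] at hbr
          exact absurd hbr (not_le.mpr hIl)
      rw [hil]
    · simp [hz]
  -- defender pure cost
  have cost : ∀ k : Fin m,
      ∑ φ, π φ * ((Pi.single k 1 : Fin m → ℝ) ⬝ᵥ
          (OmegaMat τ cF I φ *ᵥ (Pi.single (i φ) 1 : Fin m → ℝ))) =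
      cF / τ k + (if l ≤ k then ∑ φ, π φ * I φ l else 0) := by
    intro k
    have e : ∀ φ, π φ * ((Pi.single k 1 : Fin m → ℝ) ⬝ᵥ
        (OmegaMat τ cF I φ *ᵥ (Pi.single (i φ) 1 : Fin m → ℝ))) =
        π φ * (cF / τ k) + π φ * (if l ≤ k then I φ l else 0) := by
      intro φ
      rw [single_dot_mulVec]
      simp only [OmegaMat, Matrix.of_apply, key φ k, mul_add]
    rw [Finset.sum_congr rfl (fun φ _ => e φ), Finset.sum_add_distrib,
      ← Finset.sum_mul, hπ1, one_mul]
    by_cases hc : l ≤ k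
    · simp [hc]
    · simp [hc]
  have hdef' : ∀ k : Fin m,
      cF / τ l + (if l ≤ l then ∑ φ, π φ * I φ l else 0) ≤
      cF / τ k + (if l ≤ k then ∑ φ, π φ * I φ l else 0) := by
    intro k
    have h1 := hdef (Pi.single k 1) (probvec_single k)
    simpa only [cost] using h1
  by_cases hl : l = (⟨m - 1, by omega⟩ : Fin m)
  · have h1 := hdef' ⟨m - 2, by omega⟩
    have hnot : ¬ l ≤ (⟨m - 2, by omega⟩ : Fin m) := by
      rw [hl]; simp [Fin.le_def]; omega
    rw [if_pos le_rfl, if_neg hnot, hl] at h1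
    linarith
  · have hlt : l < (⟨m - 1, by omega⟩ : Fin m) := by
      have h1 := l.isLt
      have h2 : l.val ≠ m - 1 := fun h => hl (Fin.ext h)
      rw [Fin.lt_def]; simp; omega
    have h1 := hdef' ⟨m - 1, by omega⟩
    rw [if_pos le_rfl, if_pos (le_of_lt hlt)] at h1
    have h2 : cF / τ ⟨m - 1, by omega⟩ < cF / τ l :=
      div_lt_div_of_pos_left hcF (hτpos l) (hτmono hlt)
    linarith
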